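/- arXiv:2506.00017 — 2 statements merged into one kernel-verified Lean document; each statement's English description precedes it below -/
import Mathlib

section
/- Let α > 0 and β > 0, and let f : ℝ → ℝ be continuous on [0, ∞). Then for every t ≥ 0, J^α(J^β f)(t) = J^{α+β} f(t); that is, (1/Γ(α)) ∫_0^t (t-s)^{α-1} ((1/Γ(β)) ∫_0^s (s-u)^{β-1} f(u) du) ds = (1/Γ(α+β)) ∫_0^t (t-s)^{α+β-1} f(s) ds. -/
/-!
Writing both sides as iterated integrals, Fubini on the triangle `0 < u < s ≤ t` (Dirichlet's
formula) turns `J^α (J^β f) t` into `∫_0^t f u (∫_u^t (s - u)^(β-1) (t - s)^(α-1) ds) du`.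
After the affine substitution `s = u + (t - u) x` the inner integral is the Euler beta integral
`B(β, α) (t - u)^(α+β-1) = Γ(α) Γ(β) / Γ(α + β) · (t - u)^(α+β-1)`. The same computation shows
that the kernel is integrable on the triangle, and a continuous `f` is bounded there.
-/

/-- The Riemann–Liouville fractional integral of order `α`:
`(J^α f)(t) = (1/Γ(α)) ∫_0^t (t-s)^(α-1) f(s) ds`. -/
noncomputable def riemannLiouville (α : ℝ) (f : ℝ → ℝ) (t : ℝ) : ℝ :=
  (1 / Real.Gamma α) * ∫ s in (0:ℝ)..t, (t - s) ^ (α - 1) * f s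

open MeasureTheory Set Real Function
open ProbabilityTheory (beta beta_pos beta_eq_betaIntegralReal)

theorem integral_rpow_mul_one_sub_rpow {a b : ℝ} (ha : 0 < a) (hb : 0 < b) :
    ∫ x in (0:ℝ)..1, x ^ (a - 1) * (1 - x) ^ (b - 1) = beta a b := by
  have h : Complex.betaIntegral a b =
      ↑(∫ x in (0:ℝ)..1, x ^ (a - 1) * (1 - x) ^ (b - 1)) := by
    rw [Complex.betaIntegral, ← intervalIntegral.integral_ofReal]
    refine intervalIntegral.integral_congr fun x hx => ?_
    rw [uIcc_of_le zero_le_one] at hx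
    push_cast [Complex.ofReal_cpow hx.1, Complex.ofReal_cpow (sub_nonneg.2 hx.2)]
    rfl
  rw [beta_eq_betaIntegralReal a b ha hb, h, Complex.ofReal_re]

theorem integral_sub_rpow_mul_sub_rpow {a b u t : ℝ} (ha : 0 < a) (hb : 0 < b) (hut : u < t) :
    ∫ s in u..t, (s - u) ^ (a - 1) * (t - s) ^ (b - 1) = beta a b * (t - u) ^ (a + b - 1) := by
  have hc : 0 < t - u := sub_pos.2 hut
  have hsubst : ∀ x ∈ uIcc (0:ℝ) 1,
      ((t - u) * x + u - u) ^ (a - 1) * (t - ((t - u) * x + u)) ^ (b - 1) =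
        (t - u) ^ (a + b - 2) * (x ^ (a - 1) * (1 - x) ^ (b - 1)) := by
    intro x hx
    rw [uIcc_of_le zero_le_one] at hx
    rw [show t - ((t - u) * x + u) = (t - u) * (1 - x) by ring, add_sub_cancel_right,
      mul_rpow hc.le hx.1, mul_rpow hc.le (sub_nonneg.2 hx.2),
      show a + b - 2 = (a - 1) + (b - 1) by ring, rpow_add hc]
    ring
  calc ∫ s in u..t, (s - u) ^ (a - 1) * (t - s) ^ (b - 1)
      = (t - u) * ∫ x in (0:ℝ)..1,
          ((t - u) * x + u - u) ^ (a - 1) * (t - ((t - u) * x + u)) ^ (b - 1) := by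
        rw [intervalIntegral.mul_integral_comp_mul_add
          (f := fun s => (s - u) ^ (a - 1) * (t - s) ^ (b - 1))]
        simp
    _ = (t - u) * ((t - u) ^ (a + b - 2) * beta a b) := by
        rw [intervalIntegral.integral_congr hsubst, intervalIntegral.integral_const_mul,
          integral_rpow_mul_one_sub_rpow ha hb]
    _ = beta a b * (t - u) ^ (a + b - 1) := by
        rw [show a + b - 1 = 1 + (a + b - 2) by ring, rpow_add hc, rpow_one]
        ring

theorem intervalIntegrable_sub_rpow {r : ℝ} (hr : -1 < r) (c a b : ℝ) :
    IntervalIntegrable (fun x => (c - x) ^ r) volume a b := by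
  simpa using
    (intervalIntegral.intervalIntegrable_rpow' (a := c - a) (b := c - b) hr).comp_sub_left c

def triangle (t : ℝ) : Set (ℝ × ℝ) :=
  {p | 0 < p.2 ∧ p.2 < p.1 ∧ p.1 ≤ t}

theorem measurableSet_triangle (t : ℝ) : MeasurableSet (triangle t) :=
  (measurableSet_lt measurable_const measurable_snd).inter
    ((measurableSet_lt measurable_snd measurable_fst).inter
      (measurableSet_le measurable_fst measurable_const))

section Triangle

variable {E : Type*} [NormedAddCommGroup E] {t : ℝ}

theorem integrableOn_triangle_iff {G : ℝ × ℝ → E} :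
    IntegrableOn G (triangle t) ↔
      Integrable ({p : ℝ × ℝ | p.2 < p.1}.indicator G)
        ((volume.restrict (Ioc 0 t)).prod (volume.restrict (Ioc 0 t))) := by
  have hlt : MeasurableSet {p : ℝ × ℝ | p.2 < p.1} :=
    measurableSet_lt measurable_snd measurable_fst
  rw [integrable_indicator_iff hlt, Measure.prod_restrict, ← Measure.volume_eq_prod,
    IntegrableOn, IntegrableOn, Measure.restrict_restrict hlt]
  congr! 2
  ext ⟨s, u⟩
  simp only [triangle, mem_ofPred_eq, mem_inter_iff, mem_prod, mem_Ioc]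
  grind

theorem integral_indicator_lt_left [NormedSpace ℝ E] {F : ℝ → ℝ → E} {s : ℝ}
    (hs : s ∈ Ioc 0 t) :
    ∫ u, {p : ℝ × ℝ | p.2 < p.1}.indicator (uncurry F) (s, u) ∂volume.restrict (Ioc 0 t) =
      ∫ u in 0..s, F s u := by
  have hsec : (fun u => {p : ℝ × ℝ | p.2 < p.1}.indicator (uncurry F) (s, u)) =
      (Iio s).indicator (F s) := by
    ext u
    simp only [indicator, mem_ofPred_eq, mem_Iio, uncurry_apply_pair]
  have hset : Iio s ∩ Ioc 0 t = Ioo 0 s := by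
    ext u
    simp only [mem_inter_iff, mem_Iio, mem_Ioc, mem_Ioo]
    grind
  rw [hsec, integral_indicator measurableSet_Iio, Measure.restrict_restrict measurableSet_Iio,
    hset, ← integral_Ioc_eq_integral_Ioo, intervalIntegral.integral_of_le hs.1.le]

theorem integral_indicator_lt_right [NormedSpace ℝ E] {F : ℝ → ℝ → E} {u : ℝ}
    (hu : u ∈ Ioc 0 t) :
    ∫ s, {p : ℝ × ℝ | p.2 < p.1}.indicator (uncurry F) (s, u) ∂volume.restrict (Ioc 0 t) =
      ∫ s in u..t, F s u := by
  have hsec : (fun s => {p : ℝ × ℝ | p.2 < p.1}.indicator (uncurry F) (s, u)) =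
      (Ioi u).indicator (fun s => F s u) := by
    ext s
    simp only [indicator, mem_ofPred_eq, mem_Ioi, uncurry_apply_pair]
  have hset : Ioi u ∩ Ioc 0 t = Ioc u t := by
    ext s
    simp only [mem_inter_iff, mem_Ioi, mem_Ioc]
    grind
  rw [hsec, integral_indicator measurableSet_Ioi, Measure.restrict_restrict measurableSet_Ioi,
    hset, intervalIntegral.integral_of_le hu.2]

theorem integral_integral_swap_triangle [NormedSpace ℝ E] {F : ℝ → ℝ → E} (ht : 0 ≤ t)
    (hF : IntegrableOn (uncurry F) (triangle t)) :
    ∫ s in 0..t, ∫ u in 0..s, F s u = ∫ u in 0..t, ∫ s in u..t, F s u := by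
  have hswap := integral_integral_swap
    (f := fun s u => {p : ℝ × ℝ | p.2 < p.1}.indicator (uncurry F) (s, u))
    (integrableOn_triangle_iff.1 hF)
  rw [intervalIntegral.integral_of_le ht, intervalIntegral.integral_of_le ht,
    ← setIntegral_congr_fun measurableSet_Ioc fun s hs => integral_indicator_lt_left hs,
    ← setIntegral_congr_fun measurableSet_Ioc fun u hu => integral_indicator_lt_right hu]
  exact hswap

end Triangle

theorem integrableOn_triangle_sub_rpow_mul_sub_rpow {a b t : ℝ} (ha : 0 < a) (hb : 0 < b) :
    IntegrableOn (uncurry fun s u => (s - u) ^ (b - 1) * (t - s) ^ (a - 1)) (triangle t) := by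
  set K : ℝ → ℝ → ℝ := fun s u => (s - u) ^ (b - 1) * (t - s) ^ (a - 1)
  set μ := volume.restrict (Ioc (0 : ℝ) t)
  have hlt : MeasurableSet {p : ℝ × ℝ | p.2 < p.1} :=
    measurableSet_lt measurable_snd measurable_fst
  have hK_nonneg : ∀ s ∈ Ioc 0 t, ∀ u,
      0 ≤ {p : ℝ × ℝ | p.2 < p.1}.indicator (uncurry K) (s, u) := by
    intro s hs u
    simp only [indicator, mem_ofPred_eq, uncurry_apply_pair, K]
    split_ifs with hus
    · exact mul_nonneg (rpow_nonneg (sub_nonneg.2 hus.le) _)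
        (rpow_nonneg (sub_nonneg.2 hs.2) _)
    · exact le_rfl
  have hK_sec : ∀ u ∈ Ioo 0 t,
      ∫ s, {p : ℝ × ℝ | p.2 < p.1}.indicator (uncurry K) (s, u) ∂μ =
        beta b a * (t - u) ^ (b + a - 1) := fun u hu =>
    (integral_indicator_lt_right ⟨hu.1, hu.2.le⟩).trans
      (integral_sub_rpow_mul_sub_rpow hb ha hu.2)
  have hae : ∀ᵐ u ∂μ, u ∈ Ioo 0 t :=
    (ae_restrict_mem measurableSet_Ioc).mp ((ae_restrict_of_ae (Measure.ae_ne volume t)).mono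
      fun u hne hu => ⟨hu.1, hu.2.lt_of_ne hne⟩)
  rw [integrableOn_triangle_iff,
    integrable_prod_iff' (Measurable.indicator (by fun_prop) hlt).aestronglyMeasurable]
  constructor
  · filter_upwards [hae] with u hu
    -- a function with nonzero Bochner integral is integrable
    refine Integrable.of_integral_ne_zero ?_
    rw [hK_sec u hu]
    exact (mul_pos (beta_pos hb ha) (rpow_pos_of_pos (sub_pos.2 hu.2) _)).ne'
  · have hbeta : Integrable (fun u => beta b a * (t - u) ^ (b + a - 1)) μ :=
      ((intervalIntegrable_sub_rpow (by linarith) t 0 t).const_mul _).def'.mono_set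
        Ioc_subset_uIoc
    refine hbeta.congr ?_
    filter_upwards [hae] with u hu
    rw [← hK_sec u hu]
    refine integral_congr_ae ?_
    filter_upwards [ae_restrict_mem measurableSet_Ioc] with s hs
    exact (Real.norm_of_nonneg (hK_nonneg s hs u)).symm

theorem riemannLiouville_riemannLiouville {α β t : ℝ} (hα : 0 < α) (hβ : 0 < β) (ht : 0 ≤ t)
    {f : ℝ → ℝ} (hf : ContinuousOn f (Icc 0 t)) :
    riemannLiouville α (riemannLiouville β f) t = riemannLiouville (α + β) f t := by
  have hTf : MapsTo Prod.snd (triangle t) (Icc 0 t) :=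
    fun p hp => ⟨hp.1.le, hp.2.1.le.trans hp.2.2⟩
  obtain ⟨M, hM⟩ := isCompact_Icc.exists_bound_of_continuousOn hf
  have hint : IntegrableOn
      (uncurry fun s u => (s - u) ^ (β - 1) * (t - s) ^ (α - 1) * f u) (triangle t) :=
    (integrableOn_triangle_sub_rpow_mul_sub_rpow hα hβ).mul_bdd
      ((hf.comp continuousOn_snd hTf).aestronglyMeasurable (measurableSet_triangle t))
      ((ae_restrict_mem (measurableSet_triangle t)).mono fun p hp => hM _ (hTf hp))
  calc riemannLiouville α (riemannLiouville β f) t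
      = (Gamma α)⁻¹ * (Gamma β)⁻¹ *
          ∫ s in 0..t, ∫ u in 0..s, (s - u) ^ (β - 1) * (t - s) ^ (α - 1) * f u := by
        simp only [riemannLiouville, ← intervalIntegral.integral_const_mul]
        congr 1 with s
        congr 1 with u
        ring
    _ = (Gamma α)⁻¹ * (Gamma β)⁻¹ *
          ∫ u in 0..t, ∫ s in u..t, (s - u) ^ (β - 1) * (t - s) ^ (α - 1) * f u := by
        rw [integral_integral_swap_triangle ht hint]
    _ = (Gamma α)⁻¹ * (Gamma β)⁻¹ *
          ∫ u in 0..t, beta β α * ((t - u) ^ (α + β - 1) * f u) := by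
        congr 1
        refine intervalIntegral.integral_congr_ae
          ((Measure.ae_ne volume t).mono fun u hne hu => ?_)
        rw [uIoc_of_le ht] at hu
        rw [intervalIntegral.integral_mul_const,
          integral_sub_rpow_mul_sub_rpow hβ hα (hu.2.lt_of_ne hne), add_comm β α]
        ring
    _ = riemannLiouville (α + β) f t := by
        have hΓα := (Gamma_pos_of_pos hα).ne'
        have hΓβ := (Gamma_pos_of_pos hβ).ne'
        rw [intervalIntegral.integral_const_mul, riemannLiouville, beta, add_comm β α]
        field_simp

theorem riemannLiouville_semigroup (α β : ℝ) (hα : 0 < α) (hβ : 0 < β)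
    (f : ℝ → ℝ) (hf : ContinuousOn f (Set.Ici 0)) :
    ∀ t : ℝ, 0 ≤ t →
      riemannLiouville α (riemannLiouville β f) t = riemannLiouville (α + β) f t :=
  fun _ ht => riemannLiouville_riemannLiouville hα hβ ht (hf.mono Icc_subset_Ici_self)
end

section
/- The derivative of a shifted Legendre polynomial on [0,1] is a linear combination of lower-order shifted Legendre polynomials with the operational-matrix coefficients: for every i ∈ ℕ and every x ∈ ℝ, P_i'(x) = ∑_{j=0, i+j odd}^{i-1} 2(2j+1) · P_j(x), where the sum runs over those j ∈ {0, 1, …, i-1} for which i - j is odd. -/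
/-- The shifted Legendre polynomial on `[0,1]`:
`P_i(x) = ∑_{k=0}^{i} (-1)^(i+k) ((i+k)! / ((i-k)! (k!)^2)) x^k`. -/
noncomputable def shiftedLegendre (i : ℕ) (x : ℝ) : ℝ :=
  ∑ k ∈ Finset.range (i + 1),
    (-1 : ℝ) ^ (i + k) *
      (((i + k).factorial : ℝ) / (((i - k).factorial : ℝ) * ((k.factorial : ℝ)) ^ 2)) * x ^ k

/-!
Up to the sign `(-1)ⁱ`, `P_i` is Mathlib's `Qᵢ = Polynomial.shiftedLegendre i`, which satisfies
Rodrigues' formula `n! Qₙ = Dⁿ wⁿ` with `w = X (1 - X)`. Since `w'² = 1 - 4w` and `w'' = -2`,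
`D² w^(n+2) = (n+2)(n+1) wⁿ - (n+2)(4n+6) w^(n+1)`; applying `D^(n+1)` and Rodrigues' formula
gives `Q'_{n+2} = Q'_n - 2(2n+3) Q_{n+1}`, and the sum formula follows by two-step induction.
-/

open Finset
open scoped Nat

theorem filter_odd_add_range_add_two (n : ℕ) :
    (range (n + 2)).filter (fun j => Odd (n + 2 + j))
      = insert (n + 1) ((range n).filter (fun j => Odd (n + j))) := by
  ext j
  simp only [mem_filter, mem_insert, mem_range, Nat.odd_iff]
  omega

namespace Polynomial

variable {R : Type*} [CommRing R]

theorem derivative_X_mul_one_sub_X_pow_succ (m : ℕ) :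
    derivative ((X * (1 - X) : R[X]) ^ (m + 1)) =
      (m + 1 : R[X]) * (X * (1 - X)) ^ m * (1 - 2 * X) := by
  rw [derivative_pow_succ]
  simp only [derivative_mul, derivative_sub, derivative_X, derivative_one, map_add, map_natCast,
    C_1]
  ring

theorem iterate_derivative_two_X_mul_one_sub_X_pow (n : ℕ) :
    derivative^[2] ((X * (1 - X) : R[X]) ^ (n + 2)) =
      (((n + 2) * (n + 1) : ℕ) : R[X]) * (X * (1 - X)) ^ n
        - (((n + 2) * (4 * n + 6) : ℕ) : R[X]) * (X * (1 - X)) ^ (n + 1) := by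
  rw [Function.iterate_succ_apply, Function.iterate_one, derivative_X_mul_one_sub_X_pow_succ]
  simp only [derivative_mul, derivative_X_mul_one_sub_X_pow_succ, derivative_add,
    derivative_natCast, derivative_one, derivative_sub, derivative_ofNat, derivative_X]
  push_cast
  ring

theorem derivative_shiftedLegendre_add_two (n : ℕ) :
    derivative (shiftedLegendre (n + 2)) =
      derivative (shiftedLegendre n) - (2 * (2 * n + 3) : ℤ[X]) * shiftedLegendre (n + 1) := by
  have rodrigues (m : ℕ) :
      derivative^[m] ((X * (1 - X) : ℤ[X]) ^ m) = m ! * shiftedLegendre m := by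
    rw [factorial_mul_shiftedLegendre_eq, mul_pow]
  refine nat_mul_inj' ?_ (Nat.factorial_ne_zero (n + 2))
  calc ((n + 2)! : ℤ[X]) * derivative (shiftedLegendre (n + 2))
      = derivative^[n + 1] (derivative^[2] ((X * (1 - X) : ℤ[X]) ^ (n + 2))) := by
        rw [← derivative_natCast_mul, ← rodrigues, ← Function.iterate_succ_apply' derivative,
          ← Function.iterate_add_apply]
    _ = (((n + 2) * (n + 1) : ℕ) : ℤ[X]) * derivative ((n ! : ℤ[X]) * shiftedLegendre n)
          - (((n + 2) * (4 * n + 6) : ℕ) : ℤ[X])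
            * (((n + 1)! : ℤ[X]) * shiftedLegendre (n + 1)) := by
        rw [iterate_derivative_two_X_mul_one_sub_X_pow, iterate_derivative_sub,
          iterate_derivative_natCast_mul, iterate_derivative_natCast_mul, ← rodrigues,
          ← rodrigues, Function.iterate_succ_apply']
    _ = ((n + 2)! : ℤ[X]) * (derivative (shiftedLegendre n)
          - (2 * (2 * n + 3) : ℤ[X]) * shiftedLegendre (n + 1)) := by
        rw [derivative_natCast_mul]
        push_cast [Nat.factorial_succ]
        ring

theorem derivative_shiftedLegendre (n : ℕ) :
    derivative (shiftedLegendre n) =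
      -∑ j ∈ (range n).filter (fun j => Odd (n + j)),
        (2 * (2 * j + 1) : ℤ[X]) * shiftedLegendre j := by
  induction n using Nat.twoStepInduction with
  | zero => simp [shiftedLegendre]
  | one => norm_num [shiftedLegendre, sum_range_succ, filter_singleton]
  | more n ih _ =>
    rw [derivative_shiftedLegendre_add_two, ih, filter_odd_add_range_add_two,
      sum_insert (by simp)]
    push_cast
    ring

end Polynomial

open Polynomial in
theorem shiftedLegendre_eq_neg_one_pow_mul_aeval (i : ℕ) (x : ℝ) :
    shiftedLegendre i x = (-1) ^ i * aeval x (Polynomial.shiftedLegendre i) := by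
  rw [_root_.shiftedLegendre, Polynomial.shiftedLegendre, map_sum, mul_sum]
  refine sum_congr rfl fun k hk => ?_
  have hki : k ≤ i := Nat.lt_succ_iff.mp (mem_range.mp hk)
  simp only [map_mul, map_pow, map_neg, map_one, map_natCast, aeval_X]
  rw [Nat.cast_choose ℝ hki, Nat.cast_choose ℝ (Nat.le_add_right i k), Nat.add_sub_cancel_left,
    pow_add]
  field_simp

theorem shiftedLegendre_deriv (i : ℕ) (x : ℝ) :
    deriv (shiftedLegendre i) x
      = ∑ j ∈ (Finset.range i).filter (fun j => Odd (i + j)),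
          2 * (2 * (j : ℝ) + 1) * shiftedLegendre j x := by
  have hP : shiftedLegendre i =
      fun y => (-1) ^ i * Polynomial.aeval y (Polynomial.shiftedLegendre i) :=
    funext (shiftedLegendre_eq_neg_one_pow_mul_aeval i)
  rw [hP, deriv_const_mul _ (Polynomial.differentiableAt_aeval _), Polynomial.deriv_aeval,
    Polynomial.derivative_shiftedLegendre, map_neg, map_sum, mul_neg, mul_sum, ← sum_neg_distrib]
  refine sum_congr rfl fun j hj => ?_
  have hsign : (-1 : ℝ) ^ i = -(-1) ^ j := by
    calc (-1 : ℝ) ^ i = (-1) ^ (i + j) * (-1) ^ j := by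
          rw [pow_add, mul_assoc, ← pow_add, ← two_mul, pow_mul, neg_one_sq, one_pow, mul_one]
      _ = -(-1) ^ j := by rw [(mem_filter.mp hj).2.neg_one_pow, neg_one_mul]
  rw [shiftedLegendre_eq_neg_one_pow_mul_aeval, hsign]
  simp only [map_mul, map_add, map_ofNat, map_natCast, map_one]
  ring
end
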